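/- arXiv:2105.10434 — 9 statements merged into one kernel-verified Lean document; each statement's English description precedes it below -/
import Mathlib

section
/- An assignment p from agents A to items I ∪ {b∅} is pareto optimal (with respect to a single preference profile P) if and only if p admits no trading cycle and no self loop with respect to P. -/
variable {A : Type*} {I : Type*}

/-- A strict preference profile: `acc a b` means item `b` is acceptable to agent `a`;
`pref a b b'` means agent `a` strictly prefers item `b'` over item `b`.
Preferences form a strict linear order on the acceptable items of each agent. -/
structure Profile (A : Type*) (I : Type*) where
  acc : A → I → Prop
  pref : A → I → I → Prop
  pref_acc : ∀ a b b', pref a b b' → acc a b ∧ acc a b'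
  irrefl : ∀ a b, ¬ pref a b b
  trans : ∀ a b c d, pref a b c → pref a c d → pref a b d
  total : ∀ a b b', acc a b → acc a b' → b ≠ b' → pref a b b' ∨ pref a b' b

/-- `p` is an assignment: each item is allocated to at most one agent
(`none` plays the role of `b∅`). -/
def IsAssignment (p : A → Option I) : Prop :=
  ∀ a a' b, p a = some b → p a' = some b → a = a'

/-- An assignment is legal if every allocated item is acceptable to its owner. -/
def Legal (P : Profile A I) (p : A → Option I) : Prop :=
  ∀ a b, p a = some b → P.acc a b

/-- Strict comparison of `Option I` values from agent `a`'s point of view,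
with `none` (i.e. `b∅`) least preferred. -/
def Profile.better (P : Profile A I) (a : A) (x y : Option I) : Prop :=
  match x, y with
  | none, some b => P.acc a b
  | some b, some b' => P.pref a b b'
  | _, none => False

def Profile.betterEq (P : Profile A I) (a : A) (x y : Option I) : Prop :=
  x = y ∨ P.better a x y

/-- `q` pareto dominates `p`. -/
def Dominates (P : Profile A I) (p q : A → Option I) : Prop :=
  (∀ a, P.betterEq a (p a) (q a)) ∧ ∃ a, P.better a (p a) (q a)

/-- `p` is pareto optimal: no legal assignment pareto dominates it. -/
def ParetoOptimal (P : Profile A I) (p : A → Option I) : Prop :=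
  ¬ ∃ q : A → Option I, IsAssignment q ∧ Legal P q ∧ Dominates P p q

/-- Cyclic successor on `Fin t`. -/
def cycSucc {t : ℕ} (r : Fin t) : Fin t := ⟨((r : ℕ) + 1) % t, Nat.mod_lt _ (by have := r.2; omega)⟩

/-- `σ` lists the agents of a trading cycle with respect to assignment `p`:
the agents are distinct, each is allocated an item, and each agent strictly prefers
the item of the (cyclically) next agent over its own. -/
def IsTradingCycle (pref : A → I → I → Prop) (p : A → Option I) {t : ℕ}
    (σ : Fin t → A) : Prop :=
  Function.Injective σ ∧
    ∀ r : Fin t, ∃ b b', p (σ r) = some b ∧ p (σ (cycSucc r)) = some b' ∧ pref (σ r) b b'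

/-- The assignment admits some trading cycle. -/
def AdmitsCycle (pref : A → I → I → Prop) (p : A → Option I) : Prop :=
  ∃ (t : ℕ) (_ : 0 < t) (σ : Fin t → A), IsTradingCycle pref p σ

/-- Agent `a` admits a self loop: some unallocated item is strictly preferred by `a`
over its own allocation. -/
def AdmitsSelfLoop (P : Profile A I) (p : A → Option I) (a : A) : Prop :=
  ∃ b : I, (∀ a', p a' ≠ some b) ∧ P.better a (p a) (some b)

/-- The set `K` of agents admits a trading cycle (whose agent set is exactly `K`). -/
def SetAdmitsCycle [DecidableEq A] (pref : A → I → I → Prop) (p : A → Option I)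
    (K : Finset A) : Prop :=
  ∃ (t : ℕ) (_ : 0 < t) (σ : Fin t → A),
    IsTradingCycle pref p σ ∧ Finset.image σ Finset.univ = K

/-- `(k,α)`-optimality for a multi-layered instance `P : Fin ℓ → Profile A I`. -/
def KAOptimal [DecidableEq A] {ℓ : ℕ} (P : Fin ℓ → Profile A I) (p : A → Option I)
    (k α : ℕ) : Prop :=
  (2 ≤ k → ∀ K : Finset A, K.card = k →
      ∃ L : Finset (Fin ℓ), L.card = α ∧ ∀ j ∈ L, ¬ SetAdmitsCycle (P j).pref p K) ∧
  (k = 1 → ∀ a : A, ∃ L : Finset (Fin ℓ), L.card = α ∧ ∀ j ∈ L, ¬ AdmitsSelfLoop (P j) p a)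

/-- `(k,α)`-upper-bounded optimality. -/
def UBOptimal [DecidableEq A] {ℓ : ℕ} (P : Fin ℓ → Profile A I) (p : A → Option I)
    (k α : ℕ) : Prop :=
  (∀ K : Finset A, K.card ≤ k →
      ∃ L : Finset (Fin ℓ), L.card = α ∧ ∀ j ∈ L, ¬ SetAdmitsCycle (P j).pref p K) ∧
  (∀ a : A, ∃ L : Finset (Fin ℓ), L.card = α ∧ ∀ j ∈ L, ¬ AdmitsSelfLoop (P j) p a)

/-- `(k,α)`-subset optimality. -/
def SubsetOptimal [DecidableEq A] {ℓ : ℕ} (P : Fin ℓ → Profile A I) (p : A → Option I)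
    (k α : ℕ) : Prop :=
  (∀ K : Finset A, K.card = k →
      ∃ L : Finset (Fin ℓ), L.card = α ∧
        ∀ j ∈ L, ∀ K' : Finset A, K ⊆ K' → ¬ SetAdmitsCycle (P j).pref p K') ∧
  (k = 1 → ∀ a : A, ∃ L : Finset (Fin ℓ), L.card = α ∧ ∀ j ∈ L, ¬ AdmitsSelfLoop (P j) p a)

/-- `(k,α)`-subset* optimality: the subset condition for all nonempty subsets of size
at most `k`, and the self-loop condition for every value of `k`. -/
def SubsetStarOptimal [DecidableEq A] {ℓ : ℕ} (P : Fin ℓ → Profile A I) (p : A → Option I)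
    (k α : ℕ) : Prop :=
  (∀ K : Finset A, K.Nonempty → K.card ≤ k →
      ∃ L : Finset (Fin ℓ), L.card = α ∧
        ∀ j ∈ L, ∀ K' : Finset A, K ⊆ K' → ¬ SetAdmitsCycle (P j).pref p K') ∧
  (∀ a : A, ∃ L : Finset (Fin ℓ), L.card = α ∧ ∀ j ∈ L, ¬ AdmitsSelfLoop (P j) p a)

/-- `ℓ`-global optimality: pareto optimal (no trading cycle, no self loop) in every layer. -/
def GloballyOptimal {ℓ : ℕ} (P : Fin ℓ → Profile A I) (p : A → Option I) : Prop :=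
  ∀ j : Fin ℓ, ¬ AdmitsCycle (P j).pref p ∧ ∀ a : A, ¬ AdmitsSelfLoop (P j) p a

/-- The trading graph of `(A, I, P, p)` on vertex set `A ⊕ I`. -/
def TGraph (P : Profile A I) (p : A → Option I) : (A ⊕ I) → (A ⊕ I) → Prop :=
  fun x y =>
    match x, y with
    | Sum.inr b, Sum.inl a => p a = some b ∨ ((∀ a', p a' ≠ some b) ∧ P.acc a b)
    | Sum.inl a, Sum.inr b => (∃ b₀, p a = some b₀ ∧ P.pref a b₀ b) ∨ (p a = none ∧ P.acc a b)
    | Sum.inl _, Sum.inl _ => False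
    | Sum.inr _, Sum.inr _ => False

/-- The restriction of `p` to the reduced instance (agents allocated an item,
items allocated to some agent). -/
def redAssign (p : A → Option I) (a : {a : A // p a ≠ none}) :
    Option {b : I // ∃ a', p a' = some b} :=
  match h : p a.1 with
  | none => none
  | some b => some ⟨b, a.1, h⟩

/-- The identity assignment `p_n (a_i) = b_i` on `n` agents/items. -/
def pn (n : ℕ) : Fin n → Option (Fin n) := fun i => some i

/-- The profile `P₁(G)`: agent `a_i` prefers exactly the items
`{b_j : (v_i , v_j) ∈ E}` over its own item `b_i`. -/
def P1pref {n : ℕ} (E : Fin n → Fin n → Prop) : Fin n → Fin n → Fin n → Prop :=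
  fun i b b' => b = i ∧ E i b'

/-- The profile `P₂(n)`: agent `a_i` prefers only `b_{i+1}` (cyclically) over `b_i`. -/
def P2pref (n : ℕ) : Fin n → Fin n → Fin n → Prop :=
  fun i b b' => b = i ∧ b' = cycSucc i

/-- `colorEnum u w j` is `s_{j+1}`, the `(j+1)`-st smallest color of `[k̃] \ {u,w}`
(0-indexed `j`). -/
def colorEnum {kt : ℕ} (u w : Fin kt) (j : ℕ) : Fin kt :=
  (((Finset.univ : Finset (Fin kt)) \ {u, w}).sort (· ≤ ·)).getD j u

/-- The layer `P^{MCIS}_{{u,w}}` of the multicolored-independent-set reduction,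
recorded via the comparisons with the agents' own items. -/
def MCISpref {n kt : ℕ} (E : Fin n → Fin n → Prop) (c : Fin n → Fin kt)
    (u w : Fin kt) : Fin n → Fin n → Fin n → Prop :=
  fun r b b' => b = r ∧
    ((∃ j : ℕ, j + 1 < kt - 2 ∧ c r = colorEnum u w j ∧ c b' = colorEnum u w (j + 1)) ∨
      (0 < kt - 2 ∧ c r = colorEnum u w (kt - 3) ∧ c b' = u) ∨
      (c r = u ∧ c b' = w ∧ ¬ E r b') ∨
      (0 < kt - 2 ∧ c r = w ∧ c b' = colorEnum u w 0))

/-- Agents (and, identified with them, items) of the cross-composition for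
`Verify-UOA`: `Sum.inl r` is `a_r`; `Sum.inr (j, true)` is `c_j`; `Sum.inr (j, false)`
is `c̄_j`. Each agent owns "its" item. -/
abbrev AgQ (n s : ℕ) := Fin n ⊕ (Fin s × Bool)

/-- The assignment matching each agent with its own item. -/
def pQ (n s : ℕ) : AgQ n s → Option (AgQ n s) := fun a => some a

/-- The profile `Q_{2i-1}` (extending `P₁(G_i)`), recorded via comparisons
with the agents' own items.  `i.testBit j` is the `j`-th bit of `i`. -/
def Q1pref (n s : ℕ) (E : Fin n → Fin n → Prop) (i : ℕ) :
    AgQ n s → AgQ n s → AgQ n s → Prop :=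
  fun a b b' => b = a ∧
    match a, b' with
    | Sum.inl r, Sum.inl r' => (r : ℕ) + 1 < n ∧ E r r'
    | Sum.inl r, Sum.inr (j, bb) => (r : ℕ) = n - 1 ∧ (j : ℕ) = 0 ∧ bb = i.testBit 0
    | Sum.inr (j, bb), Sum.inr (j', bb') =>
        bb = i.testBit (j : ℕ) ∧ (j' : ℕ) = (j : ℕ) + 1 ∧ bb' = i.testBit (j' : ℕ)
    | Sum.inr (j, bb), Sum.inl r' =>
        bb = i.testBit (j : ℕ) ∧ (j : ℕ) = s - 1 ∧ ∃ rn : Fin n, (rn : ℕ) = n - 1 ∧ E rn r'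

/-- The profile `Q_{2i}` (extending `P₂(n)`), recorded via comparisons
with the agents' own items. -/
def Q2pref (n s : ℕ) (i : ℕ) : AgQ n s → AgQ n s → AgQ n s → Prop :=
  fun a b b' => b = a ∧
    match a, b' with
    | Sum.inl r, Sum.inl r' => (r' : ℕ) = (r : ℕ) + 1
    | Sum.inl r, Sum.inr (j, bb) => (r : ℕ) = n - 1 ∧ (j : ℕ) = 0 ∧ bb = i.testBit 0
    | Sum.inr (j, bb), Sum.inr (j', bb') =>
        bb = i.testBit (j : ℕ) ∧ (j' : ℕ) = (j : ℕ) + 1 ∧ bb' = i.testBit (j' : ℕ)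
    | Sum.inr (j, bb), Sum.inl r' =>
        bb = i.testBit (j : ℕ) ∧ (j : ℕ) = s - 1 ∧ (r' : ℕ) = 0

/-- A list of agents forming a trading cycle with respect to `p`. -/
def IsTCList (pref : A → I → I → Prop) (p : A → Option I) (L : List A) : Prop :=
  L ≠ [] ∧ L.Nodup ∧
    ∀ r : Fin L.length, ∃ b b',
      p (L.get r) = some b ∧ p (L.get (cycSucc r)) = some b' ∧ pref (L.get r) b b'



section Statement0Helpers

lemma better_some {P : Profile A I} {a : A} {x y : Option I} (h : P.better a x y) :
    ∃ b, y = some b := by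
  cases y with
  | none => cases x <;> exact absurd h (by simp [Profile.better])
  | some b => exact ⟨b, rfl⟩

lemma not_better_self (P : Profile A I) (a : A) (x : Option I) : ¬ P.better a x x := by
  cases x with
  | none => simp [Profile.better]
  | some b => exact P.irrefl a b

lemma cycSucc_inj {t : ℕ} : Function.Injective (cycSucc (t := t)) := by
  intro r s h
  have h2 := r.2; have h3 := s.2
  simp only [cycSucc, Fin.mk.injEq] at h
  apply Fin.ext
  rcases Nat.lt_or_ge (r.1 + 1) t with h' | h'
  · rw [Nat.mod_eq_of_lt h'] at h
    rcases Nat.lt_or_ge (s.1 + 1) t with h'' | h''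
    · rw [Nat.mod_eq_of_lt h''] at h; omega
    · have hs : s.1 + 1 = t := by omega
      rw [hs, Nat.mod_self] at h; omega
  · have hr : r.1 + 1 = t := by omega
    rw [hr, Nat.mod_self] at h
    rcases Nat.lt_or_ge (s.1 + 1) t with h'' | h''
    · rw [Nat.mod_eq_of_lt h''] at h; omega
    · have hs : s.1 + 1 = t := by omega
      omega

end Statement0Helpers

/-- an assignment `p` is pareto optimal with respect to a single preference
profile `P` iff it admits no trading cycle and no self loop. -/
theorem statement0 [Fintype A] [DecidableEq A] (P : Profile A I)
    (p : A → Option I) (hp : IsAssignment p) (hleg : Legal P p) :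
    ParetoOptimal P p ↔ (¬ AdmitsCycle P.pref p ∧ ∀ a : A, ¬ AdmitsSelfLoop P p a) := by
  constructor
  · -- pareto optimal → no cycle, no self loop
    intro hpo
    constructor
    · rintro ⟨t, ht, σ, hσinj, hσcyc⟩
      -- build the dominating assignment by trading along the cycle
      classical
      set q : A → Option I := fun a =>
        if h : ∃ r : Fin t, σ r = a then p (σ (cycSucc h.choose)) else p a with hq_def
      have hq_orbit : ∀ r : Fin t, q (σ r) = p (σ (cycSucc r)) := by
        intro r
        have hex : ∃ r' : Fin t, σ r' = σ r := ⟨r, rfl⟩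
        have : hex.choose = r := hσinj hex.choose_spec
        simp only [hq_def, dif_pos hex, this]
      have hq_off : ∀ a, (¬ ∃ r : Fin t, σ r = a) → q a = p a := by
        intro a ha; simp only [hq_def, dif_neg ha]
      apply hpo
      refine ⟨q, ?_, ?_, ?_, ?_⟩
      · -- assignment
        intro a a' b hb hb'
        by_cases h1 : ∃ r : Fin t, σ r = a <;> by_cases h2 : ∃ r : Fin t, σ r = a'
        · obtain ⟨r, rfl⟩ := h1; obtain ⟨r', rfl⟩ := h2
          rw [hq_orbit] at hb; rw [hq_orbit] at hb'
          have := hp _ _ _ hb hb'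
          exact congrArg σ (cycSucc_inj (hσinj this))
        · obtain ⟨r, rfl⟩ := h1
          rw [hq_orbit] at hb; rw [hq_off _ h2] at hb'
          exact absurd ⟨cycSucc r, hp _ _ _ hb hb'⟩ h2
        · obtain ⟨r', rfl⟩ := h2
          rw [hq_off _ h1] at hb; rw [hq_orbit] at hb'
          exact absurd ⟨cycSucc r', hp _ _ _ hb' hb⟩ h1
        · rw [hq_off _ h1] at hb; rw [hq_off _ h2] at hb'
          exact hp _ _ _ hb hb'
      · -- legal
        intro a b hb
        by_cases h1 : ∃ r : Fin t, σ r = a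
        · obtain ⟨r, rfl⟩ := h1
          rw [hq_orbit] at hb
          obtain ⟨b₀, b₁, hb₀, hb₁, hpref⟩ := hσcyc r
          rw [hb₁] at hb
          cases hb
          exact (P.pref_acc _ _ _ hpref).2
        · rw [hq_off _ h1] at hb; exact hleg a b hb
      · intro a
        by_cases h1 : ∃ r : Fin t, σ r = a
        · obtain ⟨r, rfl⟩ := h1
          obtain ⟨b₀, b₁, hb₀, hb₁, hpref⟩ := hσcyc r
          right
          rw [hq_orbit, hb₀, hb₁]
          exact hpref
        · rw [hq_off _ h1]; left; rfl
      · refine ⟨σ ⟨0, ht⟩, ?_⟩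
        obtain ⟨b₀, b₁, hb₀, hb₁, hpref⟩ := hσcyc ⟨0, ht⟩
        rw [hq_orbit, hb₀, hb₁]
        exact hpref
    · -- no self loop
      rintro a ⟨b, hfree, hbet⟩
      classical
      apply hpo
      set q : A → Option I := fun a' => if a' = a then some b else p a' with hq_def
      refine ⟨q, ?_, ?_, ?_, ⟨a, ?_⟩⟩
      · intro a₁ a₂ c h1 h2
        by_cases e1 : a₁ = a <;> by_cases e2 : a₂ = a <;>
          simp only [hq_def, e1, e2, if_pos, if_neg, if_true] at h1 h2
        · exact e1.trans e2.symm
        · cases h1; exact absurd h2 (hfree a₂)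
        · cases h2; exact absurd h1 (hfree a₁)
        · exact hp _ _ _ h1 h2
      · intro a' c hc
        by_cases e : a' = a
        · subst e
          simp only [hq_def, if_pos rfl] at hc
          cases hc
          cases hpa : p a' with
          | none => rw [hpa] at hbet; exact hbet
          | some b₀ => rw [hpa] at hbet; exact (P.pref_acc _ _ _ hbet).2
        · simp only [hq_def, if_neg e] at hc; exact hleg a' c hc
      · intro a'
        by_cases e : a' = a
        · subst e; right; simpa only [hq_def, if_pos rfl] using hbet
        · left; simp [hq_def, if_neg e]
      · simpa only [hq_def, if_pos rfl] using hbet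
  · -- no cycle & no self loop → pareto optimal
    rintro ⟨hnc, hnsl⟩ ⟨q, hq, hlegq, hall, a₀, ha₀⟩
    classical
    -- S : agents strictly better off in q
    set S := {a : A // P.better a (p a) (q a)} with hS_def
    have key : ∀ s : S, ∃ s' : S, p s'.1 = q s.1 := by
      rintro ⟨a, ha⟩
      obtain ⟨b, hb⟩ := better_some ha
      have hbet : P.better a (p a) (some b) := hb ▸ ha
      have halloc : ∃ a', p a' = some b := by
        by_contra h
        push_neg at h
        exact hnsl a ⟨b, h, hbet⟩
      obtain ⟨a', ha'⟩ := halloc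
      have hne : q a' ≠ p a' := by
        intro he
        have : a' = a := hq a' a b (he.trans ha') hb
        subst this
        rw [← ha'] at hbet
        exact not_better_self P a' (p a') hbet
      have : P.better a' (p a') (q a') := by
        rcases hall a' with h | h
        · exact absurd h.symm hne
        · exact h
      exact ⟨⟨a', this⟩, by simp [ha', hb]⟩
    choose g hg using key
    have ginj : Function.Injective g := by
      intro s s' h
      have h1 : q s.1 = q s'.1 := by rw [← hg s, ← hg s', h]
      obtain ⟨b, hb⟩ := better_some s.2
      apply Subtype.ext
      exact hq _ _ b hb (h1 ▸ hb)
    have : Finite S := Subtype.finite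
    set a₀' : S := ⟨a₀, ha₀⟩ with ha₀'_def
    -- a₀' is a periodic point of g
    obtain ⟨i, j, hij, hgij⟩ :=
      Finite.exists_ne_map_eq_of_infinite (fun n : ℕ => g^[n] a₀')
    have hper : a₀' ∈ Function.periodicPts g := by
      rcases Nat.lt_or_ge i j with h | h
      · refine Function.mk_mem_periodicPts (n := j - i) (by omega) ?_
        have : g^[i] (g^[j - i] a₀') = g^[i] a₀' := by
          rw [← Function.iterate_add_apply]
          rw [show i + (j - i) = j by omega]
          exact hgij.symm
        exact (ginj.iterate i) this
      · have h' : j < i := by omega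
        refine Function.mk_mem_periodicPts (n := i - j) (by omega) ?_
        have : g^[j] (g^[i - j] a₀') = g^[j] a₀' := by
          rw [← Function.iterate_add_apply]
          rw [show j + (i - j) = i by omega]
          exact hgij
        exact (ginj.iterate j) this
    set t := Function.minimalPeriod g a₀' with ht_def
    have ht : 0 < t := Function.minimalPeriod_pos_of_mem_periodicPts hper
    set σ : Fin t → A := fun r => (g^[r.1] a₀').1 with hσ_def
    -- cyclic identity
    have hcyc : ∀ r : Fin t, g^[(cycSucc r).1] a₀' = g (g^[r.1] a₀') := by
      intro r
      have h2 := r.2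
      rcases Nat.lt_or_ge (r.1 + 1) t with h | h
      · simp only [cycSucc, Nat.mod_eq_of_lt h]
        exact Function.iterate_succ_apply' g r.1 a₀'
      · have hr : r.1 + 1 = t := by omega
        simp only [cycSucc, hr, Nat.mod_self]
        have h1 : g^[r.1 + 1] a₀' = g (g^[r.1] a₀') := Function.iterate_succ_apply' g r.1 a₀'
        rw [hr] at h1
        have h2' : g^[t] a₀' = a₀' := Function.iterate_minimalPeriod
        show a₀' = g (g^[r.1] a₀')
        rw [← h1, h2']
    -- every orbit point is in the image of g
    have himg : ∀ r : Fin t, ∃ s : S, g^[r.1] a₀' = g s := by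
      intro r
      rcases Nat.eq_zero_or_pos r.1 with h | h
      · refine ⟨g^[t - 1] a₀', ?_⟩
        have h1 : g^[t - 1 + 1] a₀' = g (g^[t - 1] a₀') :=
          Function.iterate_succ_apply' g (t - 1) a₀'
        rw [(by omega : t - 1 + 1 = t)] at h1
        have h2' : g^[t] a₀' = a₀' := Function.iterate_minimalPeriod
        rw [h]
        show a₀' = g (g^[t - 1] a₀')
        rw [← h1, h2']
      · refine ⟨g^[r.1 - 1] a₀', ?_⟩
        have h1 : g^[r.1 - 1 + 1] a₀' = g (g^[r.1 - 1] a₀') :=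
          Function.iterate_succ_apply' g (r.1 - 1) a₀'
        rw [(by omega : r.1 - 1 + 1 = r.1)] at h1
        exact h1
    apply hnc
    refine ⟨t, ht, σ, ?_, ?_⟩
    · intro r r' h
      have := Function.iterate_injOn_Iio_minimalPeriod (f := g) (x := a₀')
        (Set.mem_Iio.mpr r.2) (Set.mem_Iio.mpr r'.2) (Subtype.ext h)
      exact Fin.ext this
    · intro r
      obtain ⟨s, hs⟩ := himg r
      have hpb : p (σ r) = q s.1 := by
        show p (g^[r.1] a₀').1 = q s.1
        rw [hs]; exact hg s
      obtain ⟨b, hb⟩ := better_some s.2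
      have hpσ : p (σ r) = some b := hpb.trans hb
      have hbet : P.better (g^[r.1] a₀').1 (p (g^[r.1] a₀').1) (q (g^[r.1] a₀').1) :=
        (g^[r.1] a₀').2
      obtain ⟨b', hb'⟩ := better_some hbet
      refine ⟨b, b', hpσ, ?_, ?_⟩
      · show p (g^[(cycSucc r).1] a₀').1 = some b'
        rw [hcyc r, hg (g^[r.1] a₀')]
        exact hb'
      · have h := hbet
        rw [show p (g^[r.1] a₀').1 = some b from hpσ, hb'] at h
        exact h
end

section
/- For a multi-layered instance, an assignment p is (k,α)-subset* optimal (for any k) if and only if p is (1,α)-subset optimal. -/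
variable {A : Type*} {I : Type*}

/-- `(k,α)`-subset* optimality is equivalent to `(1,α)`-subset optimality. -/
theorem statement3 [Fintype A] [DecidableEq A] {ℓ : ℕ} (P : Fin ℓ → Profile A I)
    (p : A → Option I) (k α : ℕ) (hk1 : 1 ≤ k) (hk2 : k ≤ Fintype.card A)
    (hα1 : 1 ≤ α) (hα2 : α ≤ ℓ) :
    SubsetStarOptimal P p k α ↔ SubsetOptimal P p 1 α := by
  constructor
  · rintro ⟨h1, h2⟩
    refine ⟨fun K hK => h1 K (Finset.card_pos.mp (hK ▸ one_pos)) (hK ▸ hk1), fun _ => h2⟩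
  · rintro ⟨h1, h2⟩
    refine ⟨fun K hne _ => ?_, h2 rfl⟩
    obtain ⟨a, ha⟩ := hne
    obtain ⟨L, hL, hL2⟩ := h1 {a} (Finset.card_singleton a)
    exact ⟨L, hL, fun j hj K' hK' =>
      hL2 j hj K' (Finset.singleton_subset_iff.mpr (hK' ha))⟩
end

section
/- For a multi-layered instance with ℓ layers and an assignment p, the following are equivalent: (1) p is (k,ℓ)-optimal for all k ∈ [n] simultaneously; (2) p is (n,ℓ)-upper-bounded optimal; (3) p is (1,ℓ)-subset optimal; (4) p is pareto optimal in every layer (ℓ-globally optimal). -/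
variable {A : Type*} {I : Type*}

lemma aux_univL {l : ℕ} (L : Finset (Fin l)) (h : L.card = l) : L = Finset.univ :=
  Finset.eq_univ_of_card L (by simp [h])

lemma aux_setCycle_toCycle [DecidableEq A] {pref : A → I → I → Prop} {p : A → Option I}
    {K : Finset A} (h : SetAdmitsCycle pref p K) : AdmitsCycle pref p := by
  obtain ⟨t, ht, σ, hσ, _⟩ := h
  exact ⟨t, ht, σ, hσ⟩

theorem statement6 [Fintype A] [DecidableEq A] {ℓ : ℕ} (P : Fin ℓ → Profile A I)
    (p : A → Option I) :
    [∀ k ∈ Finset.Icc 1 (Fintype.card A), KAOptimal P p k ℓ,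
      UBOptimal P p (Fintype.card A) ℓ,
      SubsetOptimal P p 1 ℓ,
      GloballyOptimal P p].TFAE := by
  tfae_have 4 → 1 := by
    intro hg k _
    refine ⟨fun _ K _ => ⟨Finset.univ, by simp, fun j _ hc => (hg j).1 (aux_setCycle_toCycle hc)⟩,
      fun _ a => ⟨Finset.univ, by simp, fun j _ => (hg j).2 a⟩⟩
  tfae_have 4 → 2 := by
    intro hg
    refine ⟨fun K _ => ⟨Finset.univ, by simp, fun j _ hc => (hg j).1 (aux_setCycle_toCycle hc)⟩,
      fun a => ⟨Finset.univ, by simp, fun j _ => (hg j).2 a⟩⟩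
  tfae_have 4 → 3 := by
    intro hg
    refine ⟨fun K _ => ⟨Finset.univ, by simp, fun j _ K' _ hc => (hg j).1 (aux_setCycle_toCycle hc)⟩,
      fun _ a => ⟨Finset.univ, by simp, fun j _ => (hg j).2 a⟩⟩
  tfae_have 1 → 4 := by
    intro h j
    constructor
    · rintro ⟨t, ht, σ, hσ⟩
      by_cases h2 : 2 ≤ t
      · set K := Finset.image σ Finset.univ with hKdef
        have hKc : K.card = t := by
          rw [hKdef, Finset.card_image_of_injective _ hσ.1, Finset.card_univ, Fintype.card_fin]
        have htn : t ≤ Fintype.card A := by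
          rw [← hKc]; exact Finset.card_le_univ K
        obtain ⟨L, hL, hnc⟩ := (h t (Finset.mem_Icc.2 ⟨by omega, htn⟩)).1 h2 K hKc
        exact hnc j (aux_univL L hL ▸ Finset.mem_univ j) ⟨t, ht, σ, hσ, rfl⟩
      · have ht1 : t = 1 := by omega
        subst ht1
        obtain ⟨b, b', hb, hb', hp⟩ := hσ.2 ⟨0, ht⟩
        have hcs : cycSucc (⟨0, ht⟩ : Fin 1) = ⟨0, ht⟩ := by simp [cycSucc]
        rw [hcs, hb] at hb'
        cases hb'
        exact (P j).irrefl _ _ hp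
    · intro a
      have h1 : (1 : ℕ) ∈ Finset.Icc 1 (Fintype.card A) :=
        Finset.mem_Icc.2 ⟨le_refl 1, Fintype.card_pos_iff.2 ⟨a⟩⟩
      obtain ⟨L, hL, hns⟩ := (h 1 h1).2 rfl a
      exact hns j (aux_univL L hL ▸ Finset.mem_univ j)
  tfae_have 2 → 4 := by
    intro h j
    constructor
    · rintro ⟨t, ht, σ, hσ⟩
      obtain ⟨L, hL, hnc⟩ := h.1 (Finset.image σ Finset.univ) (Finset.card_le_univ _)
      exact hnc j (aux_univL L hL ▸ Finset.mem_univ j) ⟨t, ht, σ, hσ, rfl⟩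
    · intro a
      obtain ⟨L, hL, hns⟩ := h.2 a
      exact hns j (aux_univL L hL ▸ Finset.mem_univ j)
  tfae_have 3 → 4 := by
    intro h j
    constructor
    · rintro ⟨t, ht, σ, hσ⟩
      obtain ⟨L, hL, hnc⟩ := h.1 {σ ⟨0, ht⟩} (Finset.card_singleton _)
      refine hnc j (aux_univL L hL ▸ Finset.mem_univ j) (Finset.image σ Finset.univ) ?_
        ⟨t, ht, σ, hσ, rfl⟩
      exact Finset.singleton_subset_iff.2 (Finset.mem_image_of_mem σ (Finset.mem_univ _))
    · intro a
      obtain ⟨L, hL, hns⟩ := h.2 rfl a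
      exact hns j (aux_univL L hL ▸ Finset.mem_univ j)
  tfae_finish
end

section
/- Suppose that for each layer i ∈ [ℓ], the preference profile P_i contains no trading cycle with more than k agents with respect to the assignment p. Then p is (k,α)-optimal if and only if p is (k,α)-subset optimal. -/
variable {A : Type*} {I : Type*}

lemma no_singleton_cycle [DecidableEq A] (P : Profile A I) (p : A → Option I)
    (K : Finset A) (hK : K.card = 1) : ¬ SetAdmitsCycle P.pref p K := by
  rintro ⟨t, ht, σ, ⟨hinj, hcyc⟩, himg⟩
  have ht1 : t = 1 := by
    have : (Finset.image σ Finset.univ).card = t := by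
      rw [Finset.card_image_of_injective _ hinj, Finset.card_univ, Fintype.card_fin]
    rw [himg, hK] at this
    omega
  subst ht1
  obtain ⟨b, b', hb, hb', hpref⟩ := hcyc 0
  have : cycSucc (0 : Fin 1) = 0 := rfl
  rw [this, hb] at hb'
  have : b = b' := by injection hb'
  subst this
  exact P.irrefl _ _ hpref

/-- if no layer contains a trading cycle with more than `k` agents with
respect to `p`, then `(k,α)`-optimality and `(k,α)`-subset optimality coincide. -/
theorem statement7 [DecidableEq A] {ℓ : ℕ} (P : Fin ℓ → Profile A I)
    (p : A → Option I) (k α : ℕ) (hk : 1 ≤ k) (hα : α ≤ ℓ)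
    (hcyc : ∀ (j : Fin ℓ) (K : Finset A), SetAdmitsCycle (P j).pref p K → K.card ≤ k) :
    KAOptimal P p k α ↔ SubsetOptimal P p k α := by
  constructor
  · rintro ⟨h1, h2⟩
    refine ⟨?_, h2⟩
    intro K hK
    rcases eq_or_lt_of_le hk with hk1 | hk2
    · -- k = 1
      obtain ⟨L, hLsub, hLcard⟩ :=
        Finset.exists_subset_card_eq
          (s := (Finset.univ : Finset (Fin ℓ))) (n := α) (by simpa using hα)
      refine ⟨L, hLcard, ?_⟩
      intro j _ K' hKK' hadm
      have hle := hcyc j K' hadm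
      have hK'K : K' = K := (Finset.eq_of_subset_of_card_le hKK' (by omega)).symm
      subst hK'K
      exact no_singleton_cycle _ _ _ (by omega) hadm
    · -- 2 ≤ k
      obtain ⟨L, hLcard, hL⟩ := h1 hk2 K hK
      refine ⟨L, hLcard, ?_⟩
      intro j hj K' hKK' hadm
      have hle := hcyc j K' hadm
      have hK'K : K' = K := (Finset.eq_of_subset_of_card_le hKK' (by omega)).symm
      subst hK'K
      exact hL j hj hadm
  · rintro ⟨h1, h2⟩
    refine ⟨?_, h2⟩
    intro _ K hK
    obtain ⟨L, hLcard, hL⟩ := h1 K hK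
    exact ⟨L, hLcard, fun j hj => hL j hj K Finset.Subset.rfl⟩
end

section
/- An assignment p is (n,α)-optimal if and only if it is (n,α)-subset optimal, where n is the number of agents. -/
variable {A : Type*} {I : Type*}

/-! A set of `n = |A|` agents is all of `A`, so it is its own only superset and the two notions
ask for the same thing whenever `n ≥ 2`. When `n ≤ 1` there is no trading cycle at all, since a
cycle of length one would need an agent to strictly prefer its own item to itself, so any `α`
layers witness subset optimality. -/

section TradingCycle

variable {pref : A → I → I → Prop} {p : A → Option I} {t : ℕ} {σ : Fin t → A}

theorem IsTradingCycle.length_le_card [Fintype A] (h : IsTradingCycle pref p σ) :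
    t ≤ Fintype.card A := by
  simpa using Fintype.card_le_of_injective σ h.1

theorem IsTradingCycle.one_lt_length (hirr : ∀ a b, ¬ pref a b b) (ht : 0 < t)
    (h : IsTradingCycle pref p σ) : 1 < t := by
  by_contra! hle
  obtain rfl : t = 1 := by omega
  obtain ⟨b, b', hb, hb', hpref⟩ := h.2 0
  rw [Subsingleton.elim (cycSucc (0 : Fin 1)) 0, hb, Option.some_inj] at hb'
  exact hirr _ _ (hb' ▸ hpref)

end TradingCycle

theorem not_setAdmitsCycle_of_card_le_one [Fintype A] [DecidableEq A] (P : Profile A I)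
    (p : A → Option I) (hA : Fintype.card A ≤ 1) (K : Finset A) :
    ¬ SetAdmitsCycle P.pref p K := by
  rintro ⟨t, ht, σ, hσ, -⟩
  have := hσ.one_lt_length P.irrefl ht
  have := hσ.length_le_card
  omega

section Optimality

variable [DecidableEq A] {ℓ : ℕ} {P : Fin ℓ → Profile A I} {p : A → Option I} {α : ℕ}

theorem SubsetOptimal.kaOptimal {k : ℕ} (h : SubsetOptimal P p k α) : KAOptimal P p k α := by
  refine ⟨fun _ K hK => ?_, h.2⟩
  obtain ⟨L, hL, hLK⟩ := h.1 K hK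
  exact ⟨L, hL, fun j hj => hLK j hj K subset_rfl⟩

theorem KAOptimal.subsetOptimal_card [Fintype A] (hα : α ≤ ℓ)
    (h : KAOptimal P p (Fintype.card A) α) : SubsetOptimal P p (Fintype.card A) α := by
  refine ⟨fun K hK => ?_, h.2⟩
  obtain rfl : K = Finset.univ := Finset.eq_univ_of_card K hK
  by_cases hA : 2 ≤ Fintype.card A
  · obtain ⟨L, hL, hLK⟩ := h.1 hA Finset.univ hK
    exact ⟨L, hL, fun j hj K' hK' => Finset.univ_subset_iff.mp hK' ▸ hLK j hj⟩
  · obtain ⟨L, -, hL⟩ := Finset.exists_subset_card_eq (s := (Finset.univ : Finset (Fin ℓ)))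
      (by simpa using hα)
    exact ⟨L, hL, fun j _ K' _ => not_setAdmitsCycle_of_card_le_one (P j) p (by omega) K'⟩

end Optimality

theorem statement8_general [Fintype A] [DecidableEq A] {ℓ : ℕ} (P : Fin ℓ → Profile A I)
    (p : A → Option I) (α : ℕ) (hα2 : α ≤ ℓ) :
    KAOptimal P p (Fintype.card A) α ↔ SubsetOptimal P p (Fintype.card A) α :=
  ⟨KAOptimal.subsetOptimal_card hα2, SubsetOptimal.kaOptimal⟩

/-- `(n,α)`-optimality and `(n,α)`-subset optimality coincide, where `n`
is the number of agents. -/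
theorem statement8 [Fintype A] [DecidableEq A] {ℓ : ℕ} (P : Fin ℓ → Profile A I)
    (p : A → Option I) (α : ℕ) (hα1 : 1 ≤ α) (hα2 : α ≤ ℓ) :
    KAOptimal P p (Fintype.card A) α ↔ SubsetOptimal P p (Fintype.card A) α :=
  statement8_general P p α hα2
end

section
/- The full agent set A_n admits a trading cycle in the preference profile P_1(G) with respect to the identity assignment p_n if and only if the directed graph G contains a Hamiltonian cycle. -/
variable {A : Type*} {I : Type*}

/-- the full agent set admits a trading cycle in `P₁(G)` with respect to
the identity assignment iff `G` contains a Hamiltonian cycle. -/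
theorem statement10 (n : ℕ) (hn : 0 < n) (E : Fin n → Fin n → Prop) :
    SetAdmitsCycle (P1pref E) (pn n) Finset.univ ↔
      ∃ σ : Fin n → Fin n, Function.Bijective σ ∧ ∀ r : Fin n, E (σ r) (σ (cycSucc r)) := by
  constructor
  · rintro ⟨t, ht, σ, ⟨hinj, hcyc⟩, himg⟩
    have htn : t = n := by
      have h1 : (Finset.image σ Finset.univ).card = t := by
        rw [Finset.card_image_of_injective _ hinj, Finset.card_univ, Fintype.card_fin]
      rw [himg, Finset.card_univ, Fintype.card_fin] at h1
      omega
    subst htn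
    refine ⟨σ, Finite.injective_iff_bijective.mp hinj, ?_⟩
    intro r
    obtain ⟨b, b', hb, hb', hpref⟩ := hcyc r
    simp only [pn, Option.some.injEq] at hb hb'
    obtain ⟨h1, h2⟩ := hpref
    subst hb hb'
    exact h2
  · rintro ⟨σ, hbij, hE⟩
    refine ⟨n, hn, σ, ⟨hbij.1, ?_⟩, ?_⟩
    · intro r
      exact ⟨σ r, σ (cycSucc r), rfl, rfl, rfl, hE r⟩
    · apply Finset.eq_univ_of_card
      rw [Finset.card_image_of_injective _ hbij.1, Finset.card_univ]
end

section
/- A set K ⊆ A_n of agents admits trading cycles in both preference profiles P_1(G) and P_2(n) with respect to the identity assignment p_n if and only if K = A_n and G contains a Hamiltonian cycle. -/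
variable {A : Type*} {I : Type*}

/-!
In `P₂(n)` agent `a_i` only wants `b_{i+1}`, so the agent set of any trading cycle is a nonempty
set closed under the cyclic successor, hence all of `A_n`. A trading cycle of `P₁(G)` through all
`n` agents is then exactly a cyclic ordering of the vertices along edges of `G`.
-/

lemma cycSucc_iterate_val {t : ℕ} (m : ℕ) (x : Fin t) :
    ((cycSucc^[m] x : Fin t) : ℕ) = ((x : ℕ) + m) % t := by
  induction m with
  | zero => simp [Nat.mod_eq_of_lt x.2]
  | succ m ih =>
    rw [Function.iterate_succ_apply']
    change ((cycSucc^[m] x : Fin t) + 1) % t = _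
    rw [ih, Nat.mod_add_mod, Nat.add_assoc]

lemma Finset.eq_univ_of_cycSucc_mem {n : ℕ} {K : Finset (Fin n)} (hK : K.Nonempty)
    (hsucc : ∀ x ∈ K, cycSucc x ∈ K) : K = Finset.univ := by
  obtain ⟨x, hx⟩ := hK
  refine Finset.eq_univ_of_forall fun y => ?_
  have hy : cycSucc^[(y : ℕ) + n - x] x = y := by
    apply Fin.ext
    rw [cycSucc_iterate_val, Nat.add_sub_cancel' (by omega), Nat.add_mod_right,
      Nat.mod_eq_of_lt y.2]
  have hmaps : Set.MapsTo cycSucc (K : Set (Fin n)) K := fun z hz => hsucc z hz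
  exact hy ▸ hmaps.iterate _ hx

section IdentityAssignment

variable {n t : ℕ} {σ : Fin t → Fin n}

lemma isTradingCycle_pn_iff {pref : Fin n → Fin n → Fin n → Prop} :
    IsTradingCycle pref (pn n) σ ↔
      Function.Injective σ ∧ ∀ r, pref (σ r) (σ r) (σ (cycSucc r)) := by
  simp [IsTradingCycle, pn]

lemma isTradingCycle_P1pref_iff {E : Fin n → Fin n → Prop} :
    IsTradingCycle (P1pref E) (pn n) σ ↔
      Function.Injective σ ∧ ∀ r, E (σ r) (σ (cycSucc r)) := by
  simp [isTradingCycle_pn_iff, P1pref]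

lemma isTradingCycle_P2pref_iff :
    IsTradingCycle (P2pref n) (pn n) σ ↔
      Function.Injective σ ∧ ∀ r, σ (cycSucc r) = cycSucc (σ r) := by
  simp [isTradingCycle_pn_iff, P2pref]

lemma setAdmitsCycle_P2pref_iff (hn : 0 < n) {K : Finset (Fin n)} :
    SetAdmitsCycle (P2pref n) (pn n) K ↔ K = Finset.univ := by
  constructor
  · rintro ⟨t, ht, σ, hσ, rfl⟩
    have hcomm := (isTradingCycle_P2pref_iff.1 hσ).2
    refine Finset.eq_univ_of_cycSucc_mem ((Finset.univ_nonempty_iff.2 ⟨⟨0, ht⟩⟩).image σ) ?_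
    simp only [Finset.mem_image, Finset.mem_univ, true_and]
    rintro _ ⟨r, rfl⟩
    exact ⟨cycSucc r, hcomm r⟩
  · rintro rfl
    exact ⟨n, hn, id, isTradingCycle_P2pref_iff.2 ⟨Function.injective_id, fun _ => rfl⟩,
      Finset.image_id⟩

lemma setAdmitsCycle_P1pref_univ_iff (hn : 0 < n) {E : Fin n → Fin n → Prop} :
    SetAdmitsCycle (P1pref E) (pn n) Finset.univ ↔
      ∃ σ : Fin n → Fin n, Function.Bijective σ ∧ ∀ r, E (σ r) (σ (cycSucc r)) := by
  constructor
  · rintro ⟨t, -, σ, hσ, him⟩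
    obtain ⟨hinj, hE⟩ := isTradingCycle_P1pref_iff.1 hσ
    have htn : t = n := by
      simpa [Finset.card_image_of_injective _ hinj] using congrArg Finset.card him
    subst htn
    exact ⟨σ, Finite.injective_iff_bijective.1 hinj, hE⟩
  · rintro ⟨σ, hbij, hE⟩
    exact ⟨n, hn, σ, isTradingCycle_P1pref_iff.2 ⟨hbij.injective, hE⟩,
      Finset.image_univ_of_surjective hbij.surjective⟩

end IdentityAssignment

/-- a set `K` of agents admits trading cycles in both `P₁(G)` and `P₂(n)`
with respect to the identity assignment iff `K` is the full agent set and `G` contains a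
Hamiltonian cycle. -/
theorem statement12 (n : ℕ) (hn : 0 < n) (E : Fin n → Fin n → Prop)
    (K : Finset (Fin n)) :
    (SetAdmitsCycle (P1pref E) (pn n) K ∧ SetAdmitsCycle (P2pref n) (pn n) K) ↔
      (K = Finset.univ ∧
        ∃ σ : Fin n → Fin n, Function.Bijective σ ∧ ∀ r : Fin n, E (σ r) (σ (cycSucc r))) := by
  rw [setAdmitsCycle_P2pref_iff hn, and_comm]
  exact and_congr_right fun hK => hK ▸ setAdmitsCycle_P1pref_univ_iff hn
end

section
/- Removing all agents assigned b∅ (together with their preference lists) and all items not allocated by p (together with their occurrences in preference lists) preserves the set of trading cycles in every layer: for each layer i, a cyclic sequence C is a trading cycle in the original layer P_i with respect to p if and only if C is a trading cycle in the reduced layer P_i' with respect to the restricted assignment p'. -/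
variable {A : Type*} {I : Type*}

theorem redAssign_eq_some_iff {p : A → Option I} (a : {a : A // p a ≠ none})
    (b : {b : I // ∃ a', p a' = some b}) :
    redAssign p a = some b ↔ p a.1 = some b.1 := by
  unfold redAssign
  split <;> rename_i h
  · simp [h]
  · simp only [h, Option.some_inj, ← Subtype.val_inj]

theorem IsTradingCycle.apply_ne_none {pref : A → I → I → Prop}
    {p : A → Option I} {t : ℕ} {σ : Fin t → A} (hσ : IsTradingCycle pref p σ) (r : Fin t) :
    p (σ r) ≠ none := by
  obtain ⟨b, -, hb, -⟩ := hσ.2 r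
  simp [hb]

theorem isTradingCycle_redAssign_iff (pref : A → I → I → Prop)
    (p : A → Option I) {t : ℕ} (σ' : Fin t → {a : A // p a ≠ none}) :
    IsTradingCycle (fun a b b' => pref a.1 b.1 b'.1) (redAssign p) σ' ↔
      IsTradingCycle pref p (fun r => (σ' r).1) := by
  refine ⟨fun ⟨hinj, hcyc⟩ => ⟨Subtype.val_injective.comp hinj, fun r => ?_⟩,
    fun ⟨hinj, hcyc⟩ => ⟨hinj.of_comp, fun r => ?_⟩⟩
  · obtain ⟨b, b', hb, hb', hpref⟩ := hcyc r
    exact ⟨b, b', (redAssign_eq_some_iff _ _).1 hb, (redAssign_eq_some_iff _ _).1 hb', hpref⟩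
  · obtain ⟨b, b', hb, hb', hpref⟩ := hcyc r
    exact ⟨⟨b, _, hb⟩, ⟨b', _, hb'⟩, (redAssign_eq_some_iff _ _).2 hb,
      (redAssign_eq_some_iff _ _).2 hb', hpref⟩

/-- removing the agents assigned `b∅` and the unallocated items preserves
the set of trading cycles of every layer: every original trading cycle consists of
allocated agents, and a cyclic sequence of allocated agents is a trading cycle in the
original layer iff it is one in the reduced layer with the restricted assignment. -/
theorem statement13 {A I : Type*} {ℓ : ℕ} (p : A → Option I)
    (Pr : Fin ℓ → (A → I → I → Prop)) (i : Fin ℓ) :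
    (∀ (t : ℕ) (σ : Fin t → A), IsTradingCycle (Pr i) p σ → ∀ r : Fin t, p (σ r) ≠ none) ∧
    (∀ (t : ℕ) (σ' : Fin t → {a : A // p a ≠ none}),
      IsTradingCycle (A := {a : A // p a ≠ none}) (I := {b : I // ∃ a', p a' = some b})
          (fun a b b' => Pr i a.1 b.1 b'.1) (redAssign p) σ' ↔
        IsTradingCycle (Pr i) p (fun r => (σ' r).1)) :=
  ⟨fun _ _ hσ => hσ.apply_ne_none, fun _ σ' => isTradingCycle_redAssign_iff (Pr i) p σ'⟩
end

section
/- Fix i ∈ [t]. A cyclic sequence W = (a_{j_1},b_{j_1},...,a_{j_n},b_{j_n}) with j_n = n is a trading cycle in P_1(G_i) with respect to p_n if and only if the extended sequence W' = (a_{j_1},b_{j_1},...,a_{j_n},b_{j_n}, c^i_1,d^i_1,...,c^i_{⌊log t⌋+1}, d^i_{⌊log t⌋+1}) is a trading cycle in Q_{2i−1} with respect to p. -/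
variable {A : Type*} {I : Type*}

/-!
In both profiles every agent owns its own item, so a trading cycle is just an injective cyclic
sequence of agents in which each agent prefers the next one's item. Appending the chain
`c^i_1, …, c^i_{⌊log t⌋+1}` to `W` replaces the closing step `a_n → a_{j_1}` by the path
`a_n → c^i_1 → ⋯ → c^i_{⌊log t⌋+1} → a_{j_1}`: its inner steps always exist in `Q_{2i-1}`, and its
last step exists iff `(v_n, v_{j_1}) ∈ E_i`, which is exactly the closing condition in `P₁(G_i)`.
The remaining steps of `W` coincide in both profiles, because `a_n` occurs only at the end of `W`.
-/

section Cycles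

variable {α β : Type*} {m n s : ℕ}

theorem cycSucc_eq_iff (r r' : Fin m) :
    cycSucc r = r' ↔ (r' : ℕ) = r + 1 ∨ (r : ℕ) + 1 = m ∧ (r' : ℕ) = 0 := by
  have hval : (cycSucc r : ℕ) = (r + 1) % m := rfl
  rw [Fin.ext_iff, hval]
  rcases Nat.lt_or_ge ((r : ℕ) + 1) m with h | h
  · rw [Nat.mod_eq_of_lt h]; omega
  · rw [show (r : ℕ) + 1 = m by omega, Nat.mod_self]; omega

theorem forall_cycSucc_iff (R : Fin m → Fin m → Prop) :
    (∀ r, R r (cycSucc r)) ↔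
      (∀ r r' : Fin m, (r' : ℕ) = r + 1 → R r r') ∧
        ∀ r r' : Fin m, (r : ℕ) + 1 = m ∧ (r' : ℕ) = 0 → R r r' := by
  simp only [← forall_and, ← or_imp, ← cycSucc_eq_iff, forall_eq']

def Fin.appendSum (σ : Fin n → α) (c : Fin s → β) : Fin (n + s) → α ⊕ β :=
  fun r => if h : (r : ℕ) < n then Sum.inl (σ ⟨r, h⟩) else Sum.inr (c ⟨r - n, by omega⟩)

theorem Fin.appendSum_comp_finSumFinEquiv (σ : Fin n → α) (c : Fin s → β) :
    Fin.appendSum σ c ∘ finSumFinEquiv = Sum.map σ c := by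
  ext (k | j) <;> simp [Fin.appendSum]

@[simp]
theorem Fin.appendSum_castAdd (σ : Fin n → α) (c : Fin s → β) (k : Fin n) :
    Fin.appendSum σ c (Fin.castAdd s k) = .inl (σ k) :=
  congrFun (Fin.appendSum_comp_finSumFinEquiv σ c) (.inl k)

@[simp]
theorem Fin.appendSum_natAdd (σ : Fin n → α) (c : Fin s → β) (j : Fin s) :
    Fin.appendSum σ c (Fin.natAdd n j) = .inr (c j) :=
  congrFun (Fin.appendSum_comp_finSumFinEquiv σ c) (.inr j)

theorem Fin.appendSum_injective_iff {σ : Fin n → α} {c : Fin s → β} (hc : c.Injective) :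
    (Fin.appendSum σ c).Injective ↔ σ.Injective := by
  rw [← Equiv.injective_comp finSumFinEquiv, Fin.appendSum_comp_finSumFinEquiv, Sum.map_injective]
  exact and_iff_left hc

theorem forall_cycSucc_appendSum_iff (hn : 0 < n) (hs : 0 < s) (σ : Fin n → α)
    (c : Fin s → β) (R : α ⊕ β → α ⊕ β → Prop) :
    (∀ r, R (Fin.appendSum σ c r) (Fin.appendSum σ c (cycSucc r))) ↔
      (∀ k k' : Fin n, (k' : ℕ) = k + 1 → R (.inl (σ k)) (.inl (σ k'))) ∧
      (∀ (k : Fin n) (j : Fin s), (k : ℕ) + 1 = n ∧ (j : ℕ) = 0 → R (.inl (σ k)) (.inr (c j))) ∧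
      (∀ (j : Fin s) (k : Fin n), (j : ℕ) + 1 = s ∧ (k : ℕ) = 0 → R (.inr (c j)) (.inl (σ k))) ∧
      ∀ j j' : Fin s, (j' : ℕ) = j + 1 → R (.inr (c j)) (.inr (c j')) := by
  -- quantify over pairs `(r, cycSucc r)`, then split both indices with `finSumFinEquiv`
  refine (forall_congr' fun r =>
    (forall_eq' (p := fun r' => R (Fin.appendSum σ c r) (Fin.appendSum σ c r'))).symm).trans ?_
  simp only [← (finSumFinEquiv (m := n) (n := s)).forall_congr_right, Sum.forall, forall_and,
    and_assoc, cycSucc_eq_iff, finSumFinEquiv_apply_left, finSumFinEquiv_apply_right,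
    Fin.val_castAdd, Fin.val_natAdd, Fin.appendSum_castAdd, Fin.appendSum_natAdd]
  refine and_congr ?_ (and_left_comm.trans (and_congr ?_ (and_congr ?_ ?_))) <;>
    exact forall₂_congr fun _ _ => imp_congr_left (by omega)

end Cycles

theorem isTradingCycle_some_iff {pref : A → I → I → Prop} {f : A → I} {t : ℕ} {σ : Fin t → A} :
    IsTradingCycle pref (fun a => some (f a)) σ ↔
      σ.Injective ∧ ∀ r, pref (σ r) (f (σ r)) (f (σ (cycSucc r))) := by
  simp [IsTradingCycle]

theorem isTradingCycle_P1pref_pn_iff {n : ℕ} (E : Fin n → Fin n → Prop) (σ : Fin n → Fin n) :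
    IsTradingCycle (P1pref E) (pn n) σ ↔ σ.Injective ∧
      (∀ k k' : Fin n, (k' : ℕ) = k + 1 → E (σ k) (σ k')) ∧
      ∀ k k' : Fin n, (k : ℕ) + 1 = n ∧ (k' : ℕ) = 0 → E (σ k) (σ k') := by
  refine (isTradingCycle_some_iff (f := id)).trans (and_congr_right fun _ => ?_)
  exact (forall_cycSucc_iff fun k k' => P1pref E (σ k) (σ k) (σ k')).trans (by simp [P1pref])

theorem isTradingCycle_Q1pref_appendSum_iff {n s : ℕ} (hn : 0 < n) (hs : 0 < s)
    (E : Fin n → Fin n → Prop) (i : ℕ) (σ : Fin n → Fin n) :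
    IsTradingCycle (Q1pref n s E i) (pQ n s) (Fin.appendSum σ fun j => (j, i.testBit j)) ↔
      σ.Injective ∧
      (∀ k k' : Fin n, (k' : ℕ) = k + 1 → (σ k : ℕ) + 1 < n ∧ E (σ k) (σ k')) ∧
      (∀ k : Fin n, (k : ℕ) + 1 = n → (σ k : ℕ) = n - 1) ∧
      ∀ k : Fin n, (k : ℕ) = 0 → E ⟨n - 1, by omega⟩ (σ k) := by
  have hbits : (fun j : Fin s => (j, i.testBit j)).Injective := fun _ _ h => congrArg Prod.fst h
  refine (isTradingCycle_some_iff (f := id)).trans ?_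
  rw [Fin.appendSum_injective_iff hbits]
  refine and_congr_right fun _ => ?_
  refine (forall_cycSucc_appendSum_iff hn hs σ _ fun a b => Q1pref n s E i a a b).trans ?_
  simp only [Q1pref, true_and, and_true, imp_self, implies_true]
  refine and_congr_right fun _ => and_congr ?_ ?_
  · exact ⟨fun h k hk => (h k ⟨0, hs⟩ ⟨hk, rfl⟩).1,
      fun h k j hkj => ⟨h k hkj.1, hkj.2, congrArg i.testBit hkj.2⟩⟩
  · refine ⟨fun h k hk => ?_, fun h j k hjk => ⟨by omega, ⟨n - 1, by omega⟩, rfl, h k hjk.2⟩⟩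
    obtain ⟨-, rn, hrn, hE⟩ := h ⟨s - 1, by omega⟩ k ⟨by simp only; omega, hk⟩
    rwa [show rn = ⟨n - 1, by omega⟩ from Fin.ext hrn] at hE

/-- a cyclic sequence `W` over all `n` base agents ending at `a_n` is a
trading cycle in `P₁(G_i)` with respect to `p_n` iff the extended sequence `W'` obtained
by appending the chain `c^i_1,…,c^i_{⌊log t⌋+1}` is a trading cycle in `Q_{2i-1}` with
respect to `p`. -/
theorem statement17 (n t i : ℕ) (hn : 0 < n)
    (E : Fin n → Fin n → Prop) (σ : Fin n → Fin n)
    (hlast : σ ⟨n - 1, by omega⟩ = ⟨n - 1, by omega⟩) :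
    IsTradingCycle (P1pref E) (pn n) σ ↔
      IsTradingCycle (Q1pref n (Nat.log 2 t + 1) E i) (pQ n (Nat.log 2 t + 1))
        (fun r : Fin (n + (Nat.log 2 t + 1)) =>
          if h : (r : ℕ) < n then Sum.inl (σ ⟨(r : ℕ), h⟩)
          else Sum.inr (⟨(r : ℕ) - n, by omega⟩, i.testBit ((r : ℕ) - n))) := by
  have hfix : ∀ k : Fin n, (k : ℕ) + 1 = n → σ k = ⟨n - 1, by omega⟩ := fun k hk =>
    (congrArg σ (Fin.ext (show (k : ℕ) = n - 1 by omega))).trans hlast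
  change _ ↔ IsTradingCycle _ _ (Fin.appendSum σ fun j => (j, i.testBit j))
  rw [isTradingCycle_P1pref_pn_iff, isTradingCycle_Q1pref_appendSum_iff hn (Nat.succ_pos _)]
  refine and_congr_right fun hσ => ⟨?_, ?_⟩
  · rintro ⟨hpath, hclose⟩
    refine ⟨fun k k' hk => ⟨?_, hpath k k' hk⟩, fun k hk => by rw [hfix k hk], fun k hk => ?_⟩
    · -- in `Q_{2i-1}` the agent `a_n` prefers only `d^i_1`, so it may occur only last in `W`
      have hne : σ k ≠ σ ⟨n - 1, by omega⟩ := hσ.ne (by simp only [Ne, Fin.ext_iff]; omega)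
      rw [hlast, Ne, Fin.ext_iff] at hne
      dsimp only at hne
      omega
    · simpa only [hlast] using hclose ⟨n - 1, by omega⟩ k ⟨by simp only; omega, hk⟩
  · rintro ⟨hpath, -, hclose⟩
    exact ⟨fun k k' hk => (hpath k k' hk).2,
      fun k k' hkk' => by simpa only [hfix k hkk'.1] using hclose k' hkk'.2⟩
end
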